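/- arXiv:1812.06063 — 2 statements merged into one kernel-verified Lean document; each statement's English description precedes it below -/
import Mathlib

section
/- Let k be a power of 2, n ≥ 1, and f a non-increasing probability density on {1,…,k}. For an integer j ≥ 0, let L_j be the set of leaves of the idealized tree T*(f) at depth j, and let q_j = Σ_{u∈L_j} f_{I_u} be the total probability mass of f on those leaves. Then |L_j| ≤ 2 + 3 (n q_j)^{1/3}. -/
/-!
Let `S` be a set of nodes of `T*(f)` at depth `j + 1`, listed from right to left as
`d 0 > d 1 > ⋯`. A node `v` of the tree has a split parent, whose children have masses `A ≥ B`
with, after scaling by `n`, `√(A + B) < A - B`. Monotonicity of `f` makes every node left of `v`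
at least as heavy as `A` and every node right of `v` at most as heavy as `B`. Hence the scaled
masses `b r` of `d (r + 1)` satisfy `b 0, b 1 > 1` and `b r + √(b (r + 1) + b r) < b (r + 2)`.
Such a sequence grows at least like `(r ^ 2 + 2) / 9`, and summing gives
`(|S| - 2) ^ 3 ≤ 27 n Σ_{i ∈ S} f_{I_i}`, whose cube root is the claimed bound.
-/

open Finset

/-- For `k = 2^m`, the node at depth `j` and position `i` (for `i < 2^j`) of the
complete binary tree of dyadic subintervals of `{1, …, 2^m}` covers the interval
`I_{j,i} = {i · 2^{m-j} + 1, …, (i+1) · 2^{m-j}}`. -/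
def nodeInterval (m j i : ℕ) : Finset ℕ :=
  Finset.Icc (i * 2 ^ (m - j) + 1) ((i + 1) * 2 ^ (m - j))

/-- `f_{I_{j,i}} = ∑_{x ∈ I_{j,i}} f x`, the mass of `f` on the interval of node `(j, i)`. -/
noncomputable def blockSum (f : ℕ → ℝ) (m j i : ℕ) : ℝ :=
  ∑ x ∈ nodeInterval m j i, f x

/-- The idealized splitting rule: the node `(j, i)` splits iff its interval has more
than one point (i.e. `j < m`) and, with `I_v`, `I_w` the left and right halves of its
interval, `f_{I_v} - f_{I_w} > √((f_{I_v} + f_{I_w})/n)`. -/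
def Splits (f : ℕ → ℝ) (n m j i : ℕ) : Prop :=
  j < m ∧
    blockSum f m (j + 1) (2 * i) - blockSum f m (j + 1) (2 * i + 1) >
      Real.sqrt ((blockSum f m (j + 1) (2 * i) + blockSum f m (j + 1) (2 * i + 1)) / n)

/-- Membership of the node `(j, i)` in the idealized tree `T*(f)`: the root `(0, 0)`
is in the tree, and a node is in the tree iff its parent is in the tree and splits. -/
def InTree (f : ℕ → ℝ) (n m : ℕ) : ℕ → ℕ → Prop
  | 0, i => i = 0
  | j + 1, i => InTree f n m j (i / 2) ∧ Splits f n m j (i / 2)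

/-- The node `(j, i)` is a leaf of the idealized tree `T*(f)`: it belongs to the tree
and does not split. -/
def IsLeaf (f : ℕ → ℝ) (n m j i : ℕ) : Prop :=
  InTree f n m j i ∧ ¬ Splits f n m j i

theorem pow_three_le_three_mul_sum_sq (N : ℕ) :
    (N : ℝ) ^ 3 ≤ 3 * ∑ r ∈ range (N + 1), (r : ℝ) ^ 2 := by
  induction N with
  | zero => simp
  | succ N ih =>
    rw [sum_range_succ]
    push_cast
    nlinarith [(N.cast_nonneg : (0 : ℝ) ≤ N)]

/- The `+ 2` makes the induction step `(4 r + 4) / 9 ≤ √(((r + 1) ^ 2 + r ^ 2 + 4) / 9)` hold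
for every `r` (it reduces to `0 ≤ 2 r ^ 2 - 14 r + 29`); with `r ^ 2 / 9` alone it fails for
`r ≤ 7`. -/
theorem sq_add_two_div_nine_le_of_sqrt_recurrence {b : ℕ → ℝ} {N : ℕ} (h0 : 2 / 9 ≤ b 0)
    (h1 : 1 / 3 ≤ b 1) (hrec : ∀ r, r + 2 ≤ N → b r + √(b (r + 1) + b r) ≤ b (r + 2)) :
    ∀ r ≤ N, ((r : ℝ) ^ 2 + 2) / 9 ≤ b r := by
  intro r
  induction r using Nat.twoStepInduction with
  | zero => intro _; norm_num [h0]
  | one => intro _; norm_num [h1]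
  | more r ih0 ih1 =>
    intro hr
    have hstep : (4 * r + 4 : ℝ) / 9 ≤ √(b (r + 1) + b r) :=
      calc (4 * r + 4 : ℝ) / 9
          ≤ √((((r + 1 : ℕ) : ℝ) ^ 2 + 2) / 9 + ((r : ℝ) ^ 2 + 2) / 9) := by
            rw [Real.le_sqrt (by positivity) (by positivity)]
            push_cast
            nlinarith [sq_nonneg ((r : ℝ) - 7 / 2)]
        _ ≤ √(b (r + 1) + b r) :=
            Real.sqrt_le_sqrt (add_le_add (ih1 (by omega)) (ih0 (by omega)))
    push_cast
    linarith [hrec r hr, ih0 (by omega)]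

theorem pow_three_le_of_sqrt_recurrence {b : ℕ → ℝ} {N : ℕ} (h0 : 2 / 9 ≤ b 0)
    (h1 : 1 / 3 ≤ b 1) (hrec : ∀ r, r + 2 ≤ N → b r + √(b (r + 1) + b r) ≤ b (r + 2)) :
    (N : ℝ) ^ 3 ≤ 27 * ∑ r ∈ range (N + 1), b r := by
  have hb := sq_add_two_div_nine_le_of_sqrt_recurrence h0 h1 hrec
  calc (N : ℝ) ^ 3
      ≤ 3 * ∑ r ∈ range (N + 1), (r : ℝ) ^ 2 := pow_three_le_three_mul_sum_sq N
    _ ≤ 27 * ∑ r ∈ range (N + 1), ((r : ℝ) ^ 2 + 2) / 9 := by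
        rw [mul_sum, mul_sum]
        exact sum_le_sum fun r _ => by linarith
    _ ≤ 27 * ∑ r ∈ range (N + 1), b r := by
        gcongr with r hr
        exact hb r (Nat.lt_succ_iff.1 (mem_range.1 hr))

theorem le_two_add_three_mul_rpow_of_sub_two_pow_three_le {x X : ℝ} (hX : 0 ≤ X)
    (h : (x - 2) ^ 3 ≤ 27 * X) : x ≤ 2 + 3 * X ^ ((1 : ℝ) / 3) := by
  by_contra! hlt
  have hcube : (3 * X ^ ((1 : ℝ) / 3)) ^ 3 < (x - 2) ^ 3 :=
    pow_lt_pow_left₀ (by linarith) (by positivity) (by norm_num)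
  rw [mul_pow, one_div, show (3 : ℝ) = (3 : ℕ) by norm_num,
    Real.rpow_inv_natCast_pow hX (by norm_num)] at hcube
  norm_num at hcube
  linarith

theorem Finset.exists_strictAntiOn_image_range_eq (s : Finset ℕ) :
    ∃ d : ℕ → ℕ, StrictAntiOn d (Set.Iio #s) ∧ (range #s).image d = s := by
  let e := s.orderEmbOfFin rfl
  refine ⟨fun r => if h : r < #s then e (Fin.rev ⟨r, h⟩) else 0, ?_, ?_⟩
  · intro a ha b hb hab
    simp only [dif_pos (Set.mem_Iio.1 ha), dif_pos (Set.mem_Iio.1 hb)]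
    exact e.strictMono (Fin.rev_lt_rev.2 hab)
  · ext x
    simp only [mem_image, mem_range]
    constructor
    · rintro ⟨r, hr, rfl⟩
      simp only [dif_pos hr]
      exact s.orderEmbOfFin_mem rfl _
    · intro hx
      obtain ⟨i, rfl⟩ : x ∈ Set.range e := by rw [s.range_orderEmbOfFin]; exact hx
      refine ⟨Fin.rev i, (Fin.rev i).isLt, ?_⟩
      simp only [dif_pos (Fin.rev i).isLt, Fin.eta, Fin.rev_rev]

section IdealizedTree

variable {f : ℕ → ℝ} {n m : ℕ}

theorem InTree.lt_two_pow : ∀ {j i : ℕ}, InTree f n m j i → i < 2 ^ j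
  | 0, i, (h : i = 0) => by simp [h]
  | _ + 1, _, h => by have := h.1.lt_two_pow; rw [pow_succ]; omega

theorem blockSum_eq_sum_range (f : ℕ → ℝ) (m j i : ℕ) :
    blockSum f m j i = ∑ x ∈ range (2 ^ (m - j)), f (i * 2 ^ (m - j) + 1 + x) := by
  rw [blockSum, nodeInterval, ← Ico_add_one_right_eq_Icc, sum_Ico_eq_sum_range, add_one_mul,
    Nat.add_right_comm, Nat.add_sub_cancel_left]

theorem blockSum_nonneg (hf0 : ∀ x, 0 ≤ f x) (m j i : ℕ) : 0 ≤ blockSum f m j i :=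
  sum_nonneg fun x _ => hf0 x

theorem blockSum_le_blockSum (hf : AntitoneOn f (Set.Icc 1 (2 ^ m))) {j a b : ℕ} (hj : j ≤ m)
    (hab : a ≤ b) (hb : b < 2 ^ j) : blockSum f m j b ≤ blockSum f m j a := by
  rw [blockSum_eq_sum_range, blockSum_eq_sum_range]
  have hw : 2 ^ j * 2 ^ (m - j) = 2 ^ m := by rw [← pow_add, Nat.add_sub_cancel' hj]
  have hbw : b * 2 ^ (m - j) + 2 ^ (m - j) ≤ 2 ^ m := by
    rw [← add_one_mul, ← hw]; exact Nat.mul_le_mul_right _ hb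
  have haw := Nat.mul_le_mul_right (2 ^ (m - j)) hab
  refine sum_le_sum fun x hx => ?_
  have := mem_range.1 hx
  exact hf ⟨by omega, by omega⟩ ⟨by omega, by omega⟩ (by omega)

theorem Splits.sqrt_lt (hn : 0 < n) {j i : ℕ} (h : Splits f n m j i) :
    √(n * blockSum f m (j + 1) (2 * i) + n * blockSum f m (j + 1) (2 * i + 1)) <
      n * blockSum f m (j + 1) (2 * i) - n * blockSum f m (j + 1) (2 * i + 1) := by
  obtain ⟨-, h⟩ := h
  have hn' : (0 : ℝ) < n := by exact_mod_cast hn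
  rw [← mul_add, ← mul_sub, ← mul_div_cancel₀ (_ + _) hn'.ne', ← mul_assoc, ← sq,
    Real.sqrt_mul (sq_nonneg _), Real.sqrt_sq hn'.le]
  exact mul_lt_mul_of_pos_left h hn'

theorem one_lt_of_sqrt_add_lt_sub {a c : ℝ} (hc : 0 ≤ c) (h : √(a + c) < a - c) : 1 < a := by
  have hpos : 0 < a - c := (Real.sqrt_nonneg _).trans_lt h
  have hsq := (Real.sqrt_lt' hpos).1 h
  nlinarith

theorem one_lt_mul_blockSum_of_lt (hn : 0 < n) (hf0 : ∀ x, 0 ≤ f x)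
    (hf : AntitoneOn f (Set.Icc 1 (2 ^ m))) {j u v : ℕ} (hv : InTree f n m (j + 1) v)
    (huv : u < v) : 1 < n * blockSum f m (j + 1) u := by
  have hsplit : Splits f n m j (v / 2) := hv.2
  have hv2 := hv.lt_two_pow
  have hu_le := blockSum_le_blockSum hf (a := u) (b := 2 * (v / 2)) hsplit.1 (by omega) (by omega)
  have hL := one_lt_of_sqrt_add_lt_sub
    (mul_nonneg n.cast_nonneg (blockSum_nonneg hf0 _ _ _)) (hsplit.sqrt_lt hn)
  exact hL.trans_le (mul_le_mul_of_nonneg_left hu_le n.cast_nonneg)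

theorem sqrt_add_lt_sub_of_lt_of_lt (hn : 0 < n) (hf : AntitoneOn f (Set.Icc 1 (2 ^ m)))
    {j u v w : ℕ} (hv : InTree f n m (j + 1) v) (huv : u < v) (hvw : v < w)
    (hw : w < 2 ^ (j + 1)) :
    √(n * blockSum f m (j + 1) v + n * blockSum f m (j + 1) w) <
      n * blockSum f m (j + 1) u - n * blockSum f m (j + 1) w := by
  have hsplit : Splits f n m j (v / 2) := hv.2
  have hv2 := hv.lt_two_pow
  have hu_le := blockSum_le_blockSum hf (a := u) (b := 2 * (v / 2)) hsplit.1 (by omega) (by omega)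
  have hv_le := blockSum_le_blockSum hf (a := 2 * (v / 2)) (b := v) hsplit.1 (by omega) hv2
  have hw_le := blockSum_le_blockSum hf (a := 2 * (v / 2) + 1) (b := w) hsplit.1 (by omega) hw
  calc √(n * blockSum f m (j + 1) v + n * blockSum f m (j + 1) w)
      ≤ √(n * blockSum f m (j + 1) (2 * (v / 2)) +
          n * blockSum f m (j + 1) (2 * (v / 2) + 1)) := by
        gcongr
    _ < n * blockSum f m (j + 1) (2 * (v / 2)) - n * blockSum f m (j + 1) (2 * (v / 2) + 1) :=
        hsplit.sqrt_lt hn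
    _ ≤ n * blockSum f m (j + 1) u - n * blockSum f m (j + 1) w := by gcongr

theorem sub_two_pow_three_le_sum_of_inTree (hn : 0 < n) (hf0 : ∀ x, 0 ≤ f x)
    (hf : AntitoneOn f (Set.Icc 1 (2 ^ m))) {j : ℕ} (S : Finset ℕ)
    (hS : ∀ i ∈ S, InTree f n m j i) :
    ((#S : ℝ) - 2) ^ 3 ≤ 27 * ∑ i ∈ S, n * blockSum f m j i := by
  have hmass : ∀ i, 0 ≤ (n : ℝ) * blockSum f m j i :=
    fun i => mul_nonneg n.cast_nonneg (blockSum_nonneg hf0 _ _ _)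
  rcases le_or_gt #S 2 with hS2 | hS2
  · have hneg : (#S : ℝ) - 2 ≤ 0 := by
      have : (#S : ℝ) ≤ 2 := by exact_mod_cast hS2
      linarith
    have := sum_nonneg fun i (_ : i ∈ S) => hmass i
    nlinarith [Odd.pow_nonpos (n := 3) (by decide) hneg]
  obtain ⟨j, rfl⟩ : ∃ j', j = j' + 1 := by
    refine Nat.exists_eq_succ_of_ne_zero fun hj => ?_
    subst hj
    have : S ⊆ {0} := fun i hi => mem_singleton.2 (hS i hi)
    have := card_le_card this
    rw [card_singleton] at this
    omega
  obtain ⟨d, hd, hdS⟩ := S.exists_strictAntiOn_image_range_eq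
  have hmem : ∀ r < #S, InTree f n m (j + 1) (d r) :=
    fun r hr => hS _ (hdS ▸ mem_image_of_mem d (mem_range.2 hr))
  have hlt : ∀ {r r'}, r < r' → r' < #S → d r' < d r :=
    fun h h' => hd (Set.mem_Iio.2 (h.trans h')) (Set.mem_Iio.2 h') h
  set b : ℕ → ℝ := fun r => n * blockSum f m (j + 1) (d (r + 1))
  have h0 : 1 < b 0 :=
    one_lt_mul_blockSum_of_lt hn hf0 hf (hmem 0 (by omega)) (hlt one_pos (by omega))
  have h1 : 1 < b 1 :=
    one_lt_mul_blockSum_of_lt hn hf0 hf (hmem 0 (by omega)) (hlt two_pos (by omega))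
  have hrec : ∀ r, r + 2 ≤ #S - 2 → b r + √(b (r + 1) + b r) ≤ b (r + 2) := fun r hr => by
    have := sqrt_add_lt_sub_of_lt_of_lt hn hf (hmem (r + 2) (by omega))
      (hlt (r := r + 2) (r' := r + 3) (by omega) (by omega))
      (hlt (r := r + 1) (r' := r + 2) (by omega) (by omega)) (hmem (r + 1) (by omega)).lt_two_pow
    show _ + √(n * blockSum f m (j + 1) (d (r + 2)) + _) ≤ n * blockSum f m (j + 1) (d (r + 3))
    linarith
  calc ((#S : ℝ) - 2) ^ 3 = ((#S - 2 : ℕ) : ℝ) ^ 3 := by rw [Nat.cast_sub hS2.le]; norm_num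
    _ ≤ 27 * ∑ r ∈ range (#S - 2 + 1), b r :=
        pow_three_le_of_sqrt_recurrence (by linarith) (by linarith) hrec
    _ ≤ 27 * ∑ r ∈ range (#S - 2 + 1 + 1), n * blockSum f m (j + 1) (d r) := by
        rw [sum_range_succ' (fun r => _ * blockSum f m (j + 1) (d r))]
        linarith [hmass (d 0)]
    _ = 27 * ∑ i ∈ S, n * blockSum f m (j + 1) i := by
        rw [show #S - 2 + 1 + 1 = #S by omega]
        conv_rhs => rw [← hdS]
        rw [sum_image (by rw [coe_range]; exact hd.injOn)]

end IdealizedTree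

theorem stmt10_general (m n : ℕ) (hn : 1 ≤ n) (f : ℕ → ℝ)
    (hf0 : ∀ x, 0 ≤ f x)
    (hmono : ∀ x, 1 ≤ x → x + 1 ≤ 2 ^ m → f (x + 1) ≤ f x)
    (j : ℕ)
    (Lj : Finset ℕ) (hLj : ∀ i, i ∈ Lj ↔ IsLeaf f n m j i)
    (qj : ℝ) (hqj : qj = ∑ i ∈ Lj, blockSum f m j i) :
    (Lj.card : ℝ) ≤ 2 + 3 * ((n : ℝ) * qj) ^ ((1 : ℝ) / 3) := by
  have hf : AntitoneOn f (Set.Icc 1 (2 ^ m)) :=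
    antitoneOn_of_add_one_le Set.ordConnected_Icc fun x _ hx hx1 => hmono x hx.1 hx1.2
  have hq : 0 ≤ (n : ℝ) * qj := by
    rw [hqj]; exact mul_nonneg n.cast_nonneg (sum_nonneg fun i _ => blockSum_nonneg hf0 m j i)
  refine le_two_add_three_mul_rpow_of_sub_two_pow_three_le hq ?_
  rw [hqj, mul_sum]
  exact sub_two_pow_three_le_sum_of_inTree hn hf0 hf Lj fun i hi => ((hLj i).1 hi).1

/-- For `k = 2^m` a power of two, `n ≥ 1`, and `f` a non-increasing probability
density on `{1, …, k}`, if `L_j` is the set of leaves of the idealized tree `T*(f)`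
at depth `j` and `q_j` is the total probability mass of `f` on those leaves, then
`|L_j| ≤ 2 + 3 (n q_j)^{1/3}`. -/
theorem stmt10 (m n : ℕ) (hn : 1 ≤ n) (f : ℕ → ℝ)
    (hf0 : ∀ x, 0 ≤ f x)
    (hf1 : ∑ x ∈ Finset.Icc 1 (2 ^ m), f x = 1)
    (hmono : ∀ x, 1 ≤ x → x + 1 ≤ 2 ^ m → f (x + 1) ≤ f x)
    (j : ℕ)
    (Lj : Finset ℕ) (hLj : ∀ i, i ∈ Lj ↔ IsLeaf f n m j i)
    (qj : ℝ) (hqj : qj = ∑ i ∈ Lj, blockSum f m j i) :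
    (Lj.card : ℝ) ≤ 2 + 3 * ((n : ℝ) * qj) ^ ((1 : ℝ) / 3) :=
  stmt10_general m n hn f hf0 hmono j Lj hLj qj hqj
end

section
/- Suppose n and k are positive integers with 2 ≤ k ≤ e^8 n^{1/3}. Then the minimax risk for the class F_k satisfies R_n(F_k) ≥ (1/(8 e^{12})) · sqrt(k/n). -/
/-!
Assouad's lemma over a hypercube of perturbations of the linear density
`1/k + (k + 1 - 2x) ε`: on each of the `⌊k/2⌋` pairs `{2j+1, 2j+2}` a vertex `τ` tilts the
density by `±ε`, which keeps it non-increasing because the linear density drops by `2ε` per step,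
and keeps it above `1/(5k)` as long as `k² ε ≤ 4/5`. Neighbouring vertices then have Hellinger
affinity at least `1 - 10 k ε²`, so by tensorisation and Le Cam's inequality their `n`-sample
distributions overlap by at least `1 - √(20 n k ε²)`, while an estimate pays `ε` in total variation
for every pair on which its own gap test misclassifies `τ`. Hence
`R_n(F_k) ≥ ε ⌊k/2⌋ (1 - √(20 n k ε²)) / 2`, and `ε = min (4/(5k²)) (1/(100 √(nk)))` gives the
bound; `k ≤ e⁸ n^{1/3}` is exactly what keeps the first choice large enough.
-/

open Finset

/-- The class `F_k` of non-increasing probability densities on `{1, …, k}`,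
represented as functions `ℕ → ℝ` vanishing outside of `{1, …, k}`. -/
def Fk (k : ℕ) : Set (ℕ → ℝ) :=
  {f | (∀ x, 0 ≤ f x) ∧ (∀ x, x ∉ Finset.Icc 1 k → f x = 0) ∧
    (∑ x ∈ Finset.Icc 1 k, f x = 1) ∧
    (∀ x, 1 ≤ x → x + 1 ≤ k → f (x + 1) ≤ f x)}

/-- Total variation distance between two functions on `{1, …, k}`:
`TV(g, f) = (1/2) ∑_{x=1}^{k} |g x - f x|`. -/
noncomputable def TVk (k : ℕ) (g f : ℕ → ℝ) : ℝ :=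
  (∑ x ∈ Finset.Icc 1 k, |g x - f x|) / 2

/-- The risk of the density estimate `φ` (a map taking the `n` sample points to a
function on `{1, …, k}`) over the class `F`: the worst-case, over `f ∈ F`, expected
total variation distance between the estimate and `f`, the expectation being over
`n` i.i.d. samples drawn from the density `f`. -/
noncomputable def risk (n k : ℕ) (φ : (Fin n → ℕ) → ℕ → ℝ) (F : Set (ℕ → ℝ)) : ℝ :=
  ⨆ f ∈ F, ∑ x ∈ Fintype.piFinset (fun _ : Fin n => Finset.Icc 1 k),
    (∏ i, f (x i)) * TVk k (φ x) f

/-- The minimax risk `R_n(F)`: the infimum of the risk over all density estimates. -/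
noncomputable def minimaxRisk (n k : ℕ) (F : Set (ℕ → ℝ)) : ℝ :=
  ⨅ φ : (Fin n → ℕ) → ℕ → ℝ, risk n k φ F

open Real

section Hellinger

variable {α : Type*} {s : Finset α} {P Q : α → ℝ}

variable (s P Q) in
noncomputable def hellingerAffinity : ℝ := ∑ x ∈ s, √(P x * Q x)

lemma sq_sqrt_sub_sqrt_mul_add_le {p q : ℝ} (hp : 0 ≤ p) (hq : 0 ≤ q) :
    (√p - √q) ^ 2 * (p + q) ≤ (p - q) ^ 2 := by
  have hpq : p - q = (√p - √q) * (√p + √q) := by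
    linear_combination sq_sqrt hq - sq_sqrt hp
  rw [hpq, mul_pow]
  gcongr
  nlinarith [sq_sqrt hp, sq_sqrt hq, sqrt_nonneg p, sqrt_nonneg q]

lemma sum_sq_sqrt_sub_sqrt (hP : ∀ x ∈ s, 0 ≤ P x) (hQ : ∀ x ∈ s, 0 ≤ Q x)
    (hsP : ∑ x ∈ s, P x = 1) (hsQ : ∑ x ∈ s, Q x = 1) :
    ∑ x ∈ s, (√(P x) - √(Q x)) ^ 2 = 2 - 2 * hellingerAffinity s P Q := by
  have hterm : ∀ x ∈ s, (√(P x) - √(Q x)) ^ 2 = P x + Q x - 2 * √(P x * Q x) := by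
    intro x hx
    rw [sqrt_mul (hP x hx), sub_sq, sq_sqrt (hP x hx), sq_sqrt (hQ x hx)]
    ring
  rw [sum_congr rfl hterm, sum_sub_distrib, sum_add_distrib, hsP, hsQ, ← mul_sum,
    hellingerAffinity]
  ring

lemma sum_abs_sub_le_two_mul_sqrt (hP : ∀ x ∈ s, 0 ≤ P x) (hQ : ∀ x ∈ s, 0 ≤ Q x)
    (hsP : ∑ x ∈ s, P x = 1) (hsQ : ∑ x ∈ s, Q x = 1) :
    ∑ x ∈ s, |P x - Q x| ≤ 2 * √(2 - 2 * hellingerAffinity s P Q) := by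
  have hfactor : ∀ x ∈ s, |P x - Q x| = |√(P x) - √(Q x)| * (√(P x) + √(Q x)) := by
    intro x hx
    have hdiff : P x - Q x = (√(P x) - √(Q x)) * (√(P x) + √(Q x)) := by
      linear_combination sq_sqrt (hQ x hx) - sq_sqrt (hP x hx)
    rw [hdiff, abs_mul, abs_of_nonneg (by positivity : 0 ≤ √(P x) + √(Q x))]
  have hplus : ∑ x ∈ s, (√(P x) + √(Q x)) ^ 2 ≤ 4 := by
    calc ∑ x ∈ s, (√(P x) + √(Q x)) ^ 2 ≤ ∑ x ∈ s, 2 * (P x + Q x) := by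
          refine sum_le_sum fun x hx => ?_
          nlinarith [sq_sqrt (hP x hx), sq_sqrt (hQ x hx), sq_nonneg (√(P x) - √(Q x))]
      _ = 4 := by rw [← mul_sum, sum_add_distrib, hsP, hsQ]; norm_num
  calc ∑ x ∈ s, |P x - Q x|
      = ∑ x ∈ s, |√(P x) - √(Q x)| * (√(P x) + √(Q x)) := sum_congr rfl hfactor
    _ ≤ √(∑ x ∈ s, |√(P x) - √(Q x)| ^ 2) * √(∑ x ∈ s, (√(P x) + √(Q x)) ^ 2) :=
        sum_mul_le_sqrt_mul_sqrt _ _ _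
    _ ≤ √(2 - 2 * hellingerAffinity s P Q) * √4 := by
        simp only [sq_abs]
        rw [sum_sq_sqrt_sub_sqrt hP hQ hsP hsQ]
        gcongr
    _ = 2 * √(2 - 2 * hellingerAffinity s P Q) := by
        rw [show (4 : ℝ) = 2 ^ 2 by norm_num, sqrt_sq zero_le_two, mul_comm]

theorem one_sub_sqrt_le_sum_min (hP : ∀ x ∈ s, 0 ≤ P x) (hQ : ∀ x ∈ s, 0 ≤ Q x)
    (hsP : ∑ x ∈ s, P x = 1) (hsQ : ∑ x ∈ s, Q x = 1) :
    1 - √(2 - 2 * hellingerAffinity s P Q) ≤ ∑ x ∈ s, min (P x) (Q x) := by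
  have hmin : ∀ x ∈ s, min (P x) (Q x) = (P x + Q x - |P x - Q x|) / 2 := fun x _ => by
    rw [← min_add_max (P x) (Q x), ← max_sub_min_eq_abs' (P x) (Q x)]; ring
  rw [sum_congr rfl hmin, ← sum_div, sum_sub_distrib, sum_add_distrib, hsP, hsQ]
  linarith [sum_abs_sub_le_two_mul_sqrt hP hQ hsP hsQ]

variable {ι : Type*} [Fintype ι] [DecidableEq ι]

lemma sum_piFinset_prod_eq_one (hsP : ∑ x ∈ s, P x = 1) :
    ∑ x ∈ Fintype.piFinset (fun _ : ι => s), ∏ i, P (x i) = 1 := by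
  rw [← prod_univ_sum, hsP, prod_const_one]

lemma hellingerAffinity_piFinset (hP : ∀ x ∈ s, 0 ≤ P x) (hQ : ∀ x ∈ s, 0 ≤ Q x) :
    hellingerAffinity (Fintype.piFinset fun _ : ι => s) (fun x => ∏ i, P (x i))
      (fun x => ∏ i, Q (x i)) = hellingerAffinity s P Q ^ Fintype.card ι := by
  have hsqrt : ∀ x ∈ Fintype.piFinset (fun _ : ι => s),
      √((∏ i, P (x i)) * ∏ i, Q (x i)) = ∏ i, √(P (x i) * Q (x i)) := by
    intro x hx
    rw [Fintype.mem_piFinset] at hx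
    rw [← prod_mul_distrib, sqrt_prod _ fun i _ => mul_nonneg (hP _ (hx i)) (hQ _ (hx i))]
  rw [hellingerAffinity, sum_congr rfl hsqrt,
    ← prod_univ_sum (fun _ : ι => s) (fun _ y => √(P y * Q y)), prod_const, card_univ,
    hellingerAffinity]

theorem one_sub_sqrt_le_sum_min_pi (n : ℕ) (hP : ∀ x ∈ s, 0 ≤ P x) (hQ : ∀ x ∈ s, 0 ≤ Q x)
    (hsP : ∑ x ∈ s, P x = 1) (hsQ : ∑ x ∈ s, Q x = 1) :
    1 - √(2 * n * (1 - hellingerAffinity s P Q)) ≤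
      ∑ x ∈ Fintype.piFinset (fun _ : Fin n => s), min (∏ i, P (x i)) (∏ i, Q (x i)) := by
  have hprod := one_sub_sqrt_le_sum_min (s := Fintype.piFinset fun _ : Fin n => s)
    (fun x hx => prod_nonneg fun i _ => hP _ (Fintype.mem_piFinset.mp hx i))
    (fun x hx => prod_nonneg fun i _ => hQ _ (Fintype.mem_piFinset.mp hx i))
    (sum_piFinset_prod_eq_one hsP) (sum_piFinset_prod_eq_one hsQ)
  rw [hellingerAffinity_piFinset hP hQ, Fintype.card_fin] at hprod
  have hρ : 0 ≤ hellingerAffinity s P Q := sum_nonneg fun _ _ => sqrt_nonneg _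
  -- Bernoulli: `ρ ^ n ≥ 1 - n (1 - ρ)`
  have hbernoulli := one_add_mul_le_pow (a := hellingerAffinity s P Q - 1) (by linarith) n
  rw [add_sub_cancel] at hbernoulli
  refine le_trans ?_ hprod
  gcongr
  linarith

end Hellinger

lemma cast_hammingDist_eq_sum {ι β : Type*} [Fintype ι] [DecidableEq β] (x y : ι → β) :
    (hammingDist x y : ℝ) = ∑ i, if x i ≠ y i then 1 else 0 := by
  rw [hammingDist, card_filter]
  push_cast
  rfl

section Assouad

variable {α : Type*} {m : ℕ} {s : Finset α} {W : (Fin m → Bool) → α → ℝ}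
  {test : α → Fin m → Bool} {c : ℝ}

lemma two_pow_mul_le_two_mul_sum_ne (j : Fin m)
    (hc : ∀ τ, c ≤ ∑ x ∈ s, min (W τ x) (W (Function.update τ j (!τ j)) x)) :
    2 ^ m * c ≤ 2 * ∑ τ, ∑ x ∈ s, W τ x * if test x j ≠ τ j then 1 else 0 := by
  set flipAt : (Fin m → Bool) → Fin m → Bool := fun τ => Function.update τ j (!τ j)
  have hflip : Function.Involutive flipAt := fun τ => by simp [flipAt]
  set h : (Fin m → Bool) → ℝ := fun τ => ∑ x ∈ s, W τ x * if test x j ≠ τ j then 1 else 0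
  -- exactly one of `τ` and `flipAt τ` disagrees with the test in coordinate `j`
  have hpair : ∀ τ, c ≤ h τ + h (flipAt τ) := by
    intro τ
    refine (hc τ).trans ?_
    rw [← sum_add_distrib]
    refine sum_le_sum fun x _ => ?_
    simp only [flipAt, Function.update_self]
    cases test x j <;> cases τ j <;> simp
  have hsum : ∑ τ, h (flipAt τ) = ∑ τ, h τ := Equiv.sum_comp (hflip.toPerm flipAt) h
  calc 2 ^ m * c = ∑ _τ : Fin m → Bool, c := by simp
    _ ≤ ∑ τ, (h τ + h (flipAt τ)) := sum_le_sum fun τ _ => hpair τ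
    _ = 2 * ∑ τ, h τ := by rw [sum_add_distrib, hsum]; ring

theorem assouad {ε : ℝ} (L : (Fin m → Bool) → α → ℝ) (hε : 0 ≤ ε)
    (hW : ∀ τ, ∀ x ∈ s, 0 ≤ W τ x) (hL : ∀ τ, ∀ x ∈ s, ε * hammingDist (test x) τ ≤ L τ x)
    (hc : ∀ τ j, c ≤ ∑ x ∈ s, min (W τ x) (W (Function.update τ j (!τ j)) x)) :
    2 ^ m * (ε * m * c / 2) ≤ ∑ τ, ∑ x ∈ s, W τ x * L τ x := by
  calc 2 ^ m * (ε * m * c / 2) = ε / 2 * ∑ _j : Fin m, 2 ^ m * c := by simp; ring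
    _ ≤ ε / 2 * ∑ j, 2 * ∑ τ, ∑ x ∈ s, W τ x * if test x j ≠ τ j then 1 else 0 := by
        refine mul_le_mul_of_nonneg_left (sum_le_sum fun j _ => ?_) (by positivity)
        exact two_pow_mul_le_two_mul_sum_ne j fun τ => hc τ j
    _ = ∑ τ, ∑ x ∈ s, W τ x * (ε * hammingDist (test x) τ) := by
        simp only [cast_hammingDist_eq_sum, mul_sum]
        rw [sum_comm]
        refine sum_congr rfl fun τ _ => ?_
        rw [sum_comm]
        exact sum_congr rfl fun x _ => sum_congr rfl fun j _ => by ring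
    _ ≤ ∑ τ, ∑ x ∈ s, W τ x * L τ x := by
        gcongr with τ _ x hx
        · exact hW τ x hx
        · exact hL τ x hx

end Assouad

lemma sum_Icc_one_two_mul_eq_sum_fin (g : ℕ → ℝ) (m : ℕ) :
    ∑ x ∈ Icc 1 (2 * m), g x = ∑ j : Fin m, (g (2 * j + 1) + g (2 * j + 2)) := by
  rw [Fin.sum_univ_eq_sum_range (fun j => g (2 * j + 1) + g (2 * j + 2))]
  induction m with
  | zero => simp
  | succ m ih =>
    rw [show 2 * (m + 1) = 2 * m + 1 + 1 by ring, sum_Icc_succ_top (by omega),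
      sum_Icc_succ_top (by omega), ih, sum_range_succ]
    ring

lemma sum_Icc_one_two_mul_cast_eq (k : ℕ) : ∑ x ∈ Icc 1 k, 2 * (x : ℝ) = k * (k + 1) := by
  induction k with
  | zero => simp
  | succ k ih =>
    rw [sum_Icc_succ_top (by omega), ih]
    push_cast
    ring

section Construction

variable {k m : ℕ} {ε : ℝ} {τ : Fin m → Bool}

def boolSign (b : Bool) : ℝ := if b then 1 else -1

lemma abs_boolSign (b : Bool) : |boolSign b| = 1 := by
  cases b <;> simp [boolSign]

/-- The perturbation indexed by a vertex `τ` of the hypercube: on the `j`-th pair of points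
`{2j+1, 2j+2}` it is `(+1, -1)` if `τ j` and `(-1, +1)` otherwise. -/
noncomputable def bump (τ : Fin m → Bool) (x : ℕ) : ℝ :=
  if h : (x - 1) / 2 < m then (-1) ^ (x + 1) * boolSign (τ ⟨(x - 1) / 2, h⟩) else 0

lemma bump_two_mul_add_one (j : Fin m) : bump τ (2 * j + 1) = boolSign (τ j) := by
  simp [bump, pow_succ, pow_mul]

lemma bump_two_mul_add_two (j : Fin m) : bump τ (2 * j + 2) = -boolSign (τ j) := by
  have hj : (2 * (j : ℕ) + 1) / 2 = j := by omega
  simp [bump, hj, pow_succ, pow_mul]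

lemma abs_bump_le (τ : Fin m → Bool) (x : ℕ) : |bump τ x| ≤ 1 := by
  unfold bump
  split_ifs <;> simp [abs_boolSign]

lemma bump_update_of_ne (j : Fin m) (b : Bool) {x : ℕ} (hx : (x - 1) / 2 ≠ j) :
    bump (Function.update τ j b) x = bump τ x := by
  unfold bump
  split_ifs with h
  · rw [Function.update_of_ne (fun h' => hx (congrArg Fin.val h'))]
  · rfl

lemma sum_bump (τ : Fin m → Bool) (hm : 2 * m ≤ k) : ∑ x ∈ Icc 1 k, bump τ x = 0 := by
  rw [← sum_subset (Icc_subset_Icc_right hm) fun x _ hx => by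
      rw [bump, dif_neg (by simp only [mem_Icc, not_and, not_le] at *; omega)],
    sum_Icc_one_two_mul_eq_sum_fin]
  exact sum_eq_zero fun j _ => by rw [bump_two_mul_add_one, bump_two_mul_add_two]; ring

variable (k ε) in
noncomputable def linearDensity (x : ℕ) : ℝ := 1 / k + (k + 1 - 2 * x) * ε

lemma sum_linearDensity (hk : k ≠ 0) : ∑ x ∈ Icc 1 k, linearDensity k ε x = 1 := by
  have hlin : ∑ x ∈ Icc 1 k, ((k : ℝ) + 1 - 2 * x) = 0 := by
    rw [sum_sub_distrib, sum_Icc_one_two_mul_cast_eq, sum_const, Nat.card_Icc, nsmul_eq_mul]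
    push_cast
    ring
  simp only [linearDensity]
  rw [sum_add_distrib, ← sum_mul, hlin, zero_mul, add_zero, sum_const, Nat.card_Icc,
    nsmul_eq_mul, Nat.add_sub_cancel]
  field_simp

variable (k ε) in
noncomputable def cubeDensity (τ : Fin m → Bool) (x : ℕ) : ℝ :=
  if x ∈ Icc 1 k then linearDensity k ε x + ε * bump τ x else 0

lemma cubeDensity_of_mem {x : ℕ} (hx : x ∈ Icc 1 k) :
    cubeDensity k ε τ x = linearDensity k ε x + ε * bump τ x :=
  if_pos hx

lemma one_div_five_mul_le_cubeDensity (hε : 0 ≤ ε) (hεk : (k : ℝ) ^ 2 * ε ≤ 4 / 5) {x : ℕ}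
    (hx : x ∈ Icc 1 k) : 1 / (5 * k) ≤ cubeDensity k ε τ x := by
  rw [mem_Icc] at hx
  have hk : (0 : ℝ) < k := by exact_mod_cast (by omega : 0 < k)
  have hxk : (x : ℝ) ≤ k := by exact_mod_cast hx.2
  have hbump := neg_le_of_abs_le (abs_bump_le τ x)
  have hkε : (k : ℝ) * ε ≤ 4 / (5 * k) := by
    rw [le_div_iff₀ (by positivity)]; nlinarith
  rw [cubeDensity_of_mem (mem_Icc.mpr hx), linearDensity]
  calc 1 / (5 * (k : ℝ)) = 1 / k - 4 / (5 * k) := by field_simp; ring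
    _ ≤ 1 / k - k * ε := by linarith
    _ ≤ _ := by nlinarith

lemma cubeDensity_nonneg (hε : 0 ≤ ε) (hεk : (k : ℝ) ^ 2 * ε ≤ 4 / 5) (x : ℕ) :
    0 ≤ cubeDensity k ε τ x := by
  by_cases hx : x ∈ Icc 1 k
  · have hk : (0 : ℝ) < k := by rw [mem_Icc] at hx; exact_mod_cast (by omega : 0 < k)
    exact (by positivity : (0 : ℝ) ≤ 1 / (5 * k)).trans
      (one_div_five_mul_le_cubeDensity hε hεk hx)
  · rw [cubeDensity, if_neg hx]

lemma sum_cubeDensity (hk : k ≠ 0) (hm : 2 * m ≤ k) :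
    ∑ x ∈ Icc 1 k, cubeDensity k ε τ x = 1 := by
  rw [sum_congr rfl fun x hx => cubeDensity_of_mem hx, sum_add_distrib, ← mul_sum,
    sum_bump τ hm, sum_linearDensity hk, mul_zero, add_zero]

lemma cubeDensity_mem_Fk (hk : k ≠ 0) (hm : 2 * m ≤ k) (hε : 0 ≤ ε)
    (hεk : (k : ℝ) ^ 2 * ε ≤ 4 / 5) : cubeDensity k ε τ ∈ Fk k := by
  refine ⟨cubeDensity_nonneg hε hεk, fun x hx => if_neg hx, sum_cubeDensity hk hm,
    fun x hx1 hx2 => ?_⟩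
  rw [cubeDensity_of_mem (mem_Icc.mpr ⟨hx1, by omega⟩),
    cubeDensity_of_mem (mem_Icc.mpr ⟨by omega, hx2⟩), linearDensity, linearDensity]
  have h1 := abs_le.mp (abs_bump_le τ x)
  have h2 := abs_le.mp (abs_bump_le τ (x + 1))
  push_cast
  nlinarith

lemma cubeDensity_two_mul_add_one_sub (hm : 2 * m ≤ k) (j : Fin m) :
    cubeDensity k ε τ (2 * j + 1) - cubeDensity k ε τ (2 * j + 2) =
      if τ j then 4 * ε else 0 := by
  have hj := j.2
  rw [cubeDensity_of_mem (mem_Icc.mpr ⟨by omega, by omega⟩),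
    cubeDensity_of_mem (mem_Icc.mpr ⟨by omega, by omega⟩), bump_two_mul_add_one,
    bump_two_mul_add_two, linearDensity, linearDensity]
  cases τ j <;> simp only [boolSign, Bool.false_eq_true, if_true, if_false] <;> push_cast <;> ring

lemma cubeDensity_update_of_ne (j : Fin m) (b : Bool) {x : ℕ} (hx : (x - 1) / 2 ≠ j) :
    cubeDensity k ε (Function.update τ j b) x = cubeDensity k ε τ x := by
  simp only [cubeDensity, bump_update_of_ne j b hx]

lemma sq_sqrt_sub_sqrt_cubeDensity_le (hε : 0 ≤ ε) (hεk : (k : ℝ) ^ 2 * ε ≤ 4 / 5)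
    (σ : Fin m → Bool) {x : ℕ} (hx : x ∈ Icc 1 k) :
    (√(cubeDensity k ε τ x) - √(cubeDensity k ε σ x)) ^ 2 ≤ 10 * k * ε ^ 2 := by
  have hk : (0 : ℝ) < k := by rw [mem_Icc] at hx; exact_mod_cast (by omega : 0 < k)
  set p := cubeDensity k ε τ x
  set q := cubeDensity k ε σ x
  have hp : 1 / (5 * k) ≤ p := one_div_five_mul_le_cubeDensity hε hεk hx
  have hq : 1 / (5 * k) ≤ q := one_div_five_mul_le_cubeDensity hε hεk hx
  have hdiff : (p - q) ^ 2 ≤ 4 * ε ^ 2 := by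
    have hτ := abs_le.mp (abs_bump_le τ x)
    have hσ := abs_le.mp (abs_bump_le σ x)
    have hpq : p - q = ε * (bump τ x - bump σ x) := by
      simp only [p, q, cubeDensity_of_mem hx]; ring
    have hb : (bump τ x - bump σ x) ^ 2 ≤ 4 := by nlinarith
    rw [hpq, mul_pow]
    nlinarith [mul_le_mul_of_nonneg_left hb (sq_nonneg ε)]
  have hp0 : 0 ≤ p := (by positivity : (0 : ℝ) ≤ 1 / (5 * k)).trans hp
  have hq0 : 0 ≤ q := (by positivity : (0 : ℝ) ≤ 1 / (5 * k)).trans hq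
  have hbound : (√p - √q) ^ 2 * (2 / (5 * k)) ≤ 4 * ε ^ 2 :=
    calc (√p - √q) ^ 2 * (2 / (5 * k)) ≤ (√p - √q) ^ 2 * (p + q) := by
          gcongr
          have htwo : 2 / (5 * (k : ℝ)) = 1 / (5 * k) + 1 / (5 * k) := by ring
          linarith
      _ ≤ (p - q) ^ 2 := sq_sqrt_sub_sqrt_mul_add_le hp0 hq0
      _ ≤ 4 * ε ^ 2 := hdiff
  rw [mul_div_assoc', div_le_iff₀ (by positivity)] at hbound
  nlinarith

lemma one_sub_le_hellingerAffinity_update (hk : k ≠ 0) (hm : 2 * m ≤ k) (hε : 0 ≤ ε)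
    (hεk : (k : ℝ) ^ 2 * ε ≤ 4 / 5) (j : Fin m) :
    1 - 10 * k * ε ^ 2 ≤ hellingerAffinity (Icc 1 k) (cubeDensity k ε τ)
      (cubeDensity k ε (Function.update τ j (!τ j))) := by
  set σ := Function.update τ j (!τ j)
  have hj := j.2
  have hpair : {2 * (j : ℕ) + 1, 2 * (j : ℕ) + 2} ⊆ Icc 1 k := by
    intro x hx
    simp only [mem_insert, mem_singleton] at hx
    rw [mem_Icc]
    omega
  have hoff : ∀ x ∈ Icc 1 k, x ∉ ({2 * (j : ℕ) + 1, 2 * (j : ℕ) + 2} : Finset ℕ) →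
      (√(cubeDensity k ε τ x) - √(cubeDensity k ε σ x)) ^ 2 = 0 := by
    intro x hx hx'
    simp only [mem_insert, mem_singleton, mem_Icc] at hx hx'
    rw [cubeDensity_update_of_ne j _ (by omega), sub_self, sq, mul_zero]
  have hsum := sum_sq_sqrt_sub_sqrt (s := Icc 1 k) (P := cubeDensity k ε τ)
    (Q := cubeDensity k ε σ) (fun x _ => cubeDensity_nonneg hε hεk x)
    (fun x _ => cubeDensity_nonneg hε hεk x) (sum_cubeDensity hk hm) (sum_cubeDensity hk hm)
  rw [← sum_subset hpair hoff, sum_pair (by omega)] at hsum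
  have h1 := sq_sqrt_sub_sqrt_cubeDensity_le (τ := τ) hε hεk σ (hpair (mem_insert_self _ _))
  have h2 := sq_sqrt_sub_sqrt_cubeDensity_le (τ := τ) hε hεk σ
    (hpair (mem_insert_of_mem (mem_singleton_self _)))
  linarith

variable (ε) in
noncomputable def pairTest (g : ℕ → ℝ) (j : Fin m) : Bool :=
  decide (2 * ε ≤ g (2 * j + 1) - g (2 * j + 2))

lemma two_mul_le_of_pairTest_ne (hm : 2 * m ≤ k) (g : ℕ → ℝ) {j : Fin m}
    (h : pairTest ε g j ≠ τ j) :
    2 * ε ≤ |g (2 * j + 1) - cubeDensity k ε τ (2 * j + 1)| +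
      |g (2 * j + 2) - cubeDensity k ε τ (2 * j + 2)| := by
  have hgap := cubeDensity_two_mul_add_one_sub (ε := ε) (τ := τ) hm j
  refine le_trans ?_ (abs_sub _ _)
  unfold pairTest at h
  cases hτ : τ j <;> simp only [hτ, Bool.false_eq_true, if_false, if_true] at h hgap
  · simp only [ne_eq, decide_eq_false_iff_not, not_not] at h
    linarith [le_abs_self ((g (2 * j + 1) - cubeDensity k ε τ (2 * j + 1)) -
      (g (2 * j + 2) - cubeDensity k ε τ (2 * j + 2)))]
  · simp only [ne_eq, decide_eq_true_iff, not_le] at h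
    linarith [neg_abs_le ((g (2 * j + 1) - cubeDensity k ε τ (2 * j + 1)) -
      (g (2 * j + 2) - cubeDensity k ε τ (2 * j + 2)))]

lemma mul_hammingDist_le_TVk (hm : 2 * m ≤ k) (g : ℕ → ℝ) :
    ε * hammingDist (pairTest ε g) τ ≤ TVk k g (cubeDensity k ε τ) := by
  rw [TVk, le_div_iff₀ two_pos, cast_hammingDist_eq_sum, mul_sum, sum_mul]
  calc ∑ j, ε * (if pairTest ε g j ≠ τ j then 1 else 0) * 2
      ≤ ∑ j : Fin m, (|g (2 * j + 1) - cubeDensity k ε τ (2 * j + 1)| +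
          |g (2 * j + 2) - cubeDensity k ε τ (2 * j + 2)|) := by
        refine sum_le_sum fun j _ => ?_
        split_ifs with h
        · linarith [two_mul_le_of_pairTest_ne hm g h]
        · simp only [mul_zero, zero_mul]
          positivity
    _ = ∑ x ∈ Icc 1 (2 * m), |g x - cubeDensity k ε τ x| :=
        (sum_Icc_one_two_mul_eq_sum_fin (fun x => |g x - cubeDensity k ε τ x|) m).symm
    _ ≤ ∑ x ∈ Icc 1 k, |g x - cubeDensity k ε τ x| :=
        sum_le_sum_of_subset_of_nonneg (Icc_subset_Icc_right hm) fun _ _ _ => abs_nonneg _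

end Construction

lemma le_ciSup_mem_of_forall_le {α β : Type*} [ConditionallyCompleteLattice α] {F : Set β}
    {G : β → α} {M : α} (hG : ∀ f ∈ F, G f ≤ M) {f : β} (hf : f ∈ F) :
    G f ≤ ⨆ g ∈ F, G g :=
  le_ciSup₂ (f := fun g (_ : g ∈ F) => G g) ⟨M, by simpa [upperBounds] using hG⟩ f hf

section Risk

variable {n k : ℕ} {f : ℕ → ℝ}

lemma le_one_of_mem_Fk (hf : f ∈ Fk k) (x : ℕ) : f x ≤ 1 := by
  obtain ⟨hf0, hfout, hfsum, -⟩ := hf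
  by_cases hx : x ∈ Icc 1 k
  · exact hfsum ▸ single_le_sum (fun y _ => hf0 y) hx
  · rw [hfout x hx]; exact zero_le_one

lemma TVk_le_of_mem_Fk (hf : f ∈ Fk k) (g : ℕ → ℝ) :
    TVk k g f ≤ (∑ y ∈ Icc 1 k, |g y| + 1) / 2 := by
  obtain ⟨hf0, -, hfsum, -⟩ := hf
  rw [TVk, ← hfsum, ← sum_congr rfl fun y _ => abs_of_nonneg (hf0 y), ← sum_add_distrib]
  gcongr with y
  exact abs_sub _ _

lemma sum_prod_mul_TVk_le_risk (φ : (Fin n → ℕ) → ℕ → ℝ) (hf : f ∈ Fk k) :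
    ∑ x ∈ Fintype.piFinset (fun _ : Fin n => Icc 1 k), (∏ i, f (x i)) * TVk k (φ x) f ≤
      risk n k φ (Fk k) := by
  rw [risk]
  set X := Fintype.piFinset fun _ : Fin n => Icc 1 k
  refine le_ciSup_mem_of_forall_le (G := fun g => ∑ x ∈ X, (∏ i, g (x i)) * TVk k (φ x) g)
    (M := ∑ x ∈ X, (∑ y ∈ Icc 1 k, |φ x y| + 1) / 2) (fun g hg => sum_le_sum fun x _ => ?_) hf
  have hTV0 : 0 ≤ TVk k (φ x) g := by rw [TVk]; positivity
  calc (∏ i, g (x i)) * TVk k (φ x) g ≤ 1 * TVk k (φ x) g := by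
        gcongr
        exact prod_le_one (fun i _ => hg.1 _) fun i _ => le_one_of_mem_Fk hg _
    _ ≤ _ := by rw [one_mul]; exact TVk_le_of_mem_Fk hg _

end Risk

theorem mul_le_minimaxRisk {n k m : ℕ} {ε : ℝ} (hk : k ≠ 0) (hm : 2 * m ≤ k) (hε : 0 ≤ ε)
    (hεk : (k : ℝ) ^ 2 * ε ≤ 4 / 5) :
    ε * m * (1 - √(20 * n * k * ε ^ 2)) / 2 ≤ minimaxRisk n k (Fk k) := by
  set X := Fintype.piFinset fun _ : Fin n => Icc 1 k
  have hc : ∀ (τ : Fin m → Bool) j, 1 - √(20 * n * k * ε ^ 2) ≤ ∑ x ∈ X,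
      min (∏ i, cubeDensity k ε τ (x i))
        (∏ i, cubeDensity k ε (Function.update τ j (!τ j)) (x i)) := by
    intro τ j
    refine le_trans ?_ (one_sub_sqrt_le_sum_min_pi n (fun x _ => cubeDensity_nonneg hε hεk x)
      (fun x _ => cubeDensity_nonneg hε hεk x) (sum_cubeDensity hk hm) (sum_cubeDensity hk hm))
    have hρ := one_sub_le_hellingerAffinity_update (τ := τ) hk hm hε hεk j
    gcongr 1 - √?_
    nlinarith [(Nat.cast_nonneg n : (0 : ℝ) ≤ n)]
  refine le_ciInf fun φ => le_of_mul_le_mul_left ?_ (by positivity : (0 : ℝ) < 2 ^ m)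
  calc 2 ^ m * (ε * m * (1 - √(20 * n * k * ε ^ 2)) / 2)
      ≤ ∑ τ : Fin m → Bool, ∑ x ∈ X, (∏ i, cubeDensity k ε τ (x i)) *
          TVk k (φ x) (cubeDensity k ε τ) :=
        assouad _ hε (fun τ x _ => prod_nonneg fun i _ => cubeDensity_nonneg hε hεk _)
          (fun τ x _ => mul_hammingDist_le_TVk hm (φ x)) hc
    _ ≤ ∑ _τ : Fin m → Bool, risk n k φ (Fk k) :=
        sum_le_sum fun τ _ => sum_prod_mul_TVk_le_risk φ (cubeDensity_mem_Fk hk hm hε hεk)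
    _ = 2 ^ m * risk n k φ (Fk k) := by simp

lemma mul_le_minimaxRisk_of_le {n k : ℕ} {ε : ℝ} (hk : 2 ≤ k) (hε : 0 ≤ ε)
    (hεk : (k : ℝ) ^ 2 * ε ≤ 4 / 5) (hεn : 20 * n * k * ε ^ 2 ≤ 1 / 400) :
    19 / 120 * k * ε ≤ minimaxRisk n k (Fk k) := by
  have hm : (k : ℝ) ≤ 3 * (k / 2 : ℕ) := by exact_mod_cast (by omega : k ≤ 3 * (k / 2))
  have hsqrt : √(20 * n * k * ε ^ 2) ≤ 1 / 20 := (sqrt_le_left (by norm_num)).2 (by linarith)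
  refine le_trans ?_ (mul_le_minimaxRisk (m := k / 2) (by omega) (by omega) hε hεk)
  have hk2 : (0 : ℝ) ≤ (k / 2 : ℕ) := Nat.cast_nonneg _
  nlinarith [mul_le_mul_of_nonneg_left hm hε,
    mul_le_mul_of_nonneg_left (by linarith : 19 / 20 ≤ 1 - √(20 * n * k * ε ^ 2))
      (mul_nonneg hε hk2)]

lemma sqrt_pow_three_le {n k : ℕ} (hk : (k : ℝ) ≤ exp 8 * (n : ℝ) ^ ((1 : ℝ) / 3)) :
    √k ^ 3 ≤ exp 12 * √n := by
  rw [← pow_le_pow_iff_left₀ (by positivity) (by positivity) two_ne_zero, mul_pow, pow_right_comm,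
    sq_sqrt (Nat.cast_nonneg k), sq_sqrt (Nat.cast_nonneg n), ← exp_nat_mul]
  calc (k : ℝ) ^ 3 ≤ (exp 8 * (n : ℝ) ^ ((1 : ℝ) / 3)) ^ 3 := by gcongr
    _ = exp (2 * 12) * n := by
      rw [mul_pow, ← exp_nat_mul, ← rpow_natCast, ← rpow_mul (Nat.cast_nonneg n)]
      norm_num

-- With `u = √k`, `v = √n`: the two candidate values of `ε` saturate `k² ε ≤ 4/5` and `n k ε² ≲ 1`.
lemma exists_perturbation_scale {u v E : ℝ} (hu : 0 < u) (hv : 0 < v) (hcube : u ^ 3 ≤ E * v)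
    (hE : 85 ≤ E) :
    ∃ ε, 0 ≤ ε ∧ (u ^ 2) ^ 2 * ε ≤ 4 / 5 ∧ 20 * v ^ 2 * u ^ 2 * ε ^ 2 ≤ 1 / 400 ∧
      1 / (8 * E) * (u / v) ≤ 19 / 120 * u ^ 2 * ε := by
  refine ⟨min (4 / (5 * u ^ 4)) (1 / (100 * u * v)), le_min (by positivity) (by positivity),
    ?_, ?_, ?_⟩
  · calc (u ^ 2) ^ 2 * min (4 / (5 * u ^ 4)) (1 / (100 * u * v))
        ≤ (u ^ 2) ^ 2 * (4 / (5 * u ^ 4)) := by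
          gcongr; exact min_le_left _ _
      _ = 4 / 5 := by field_simp
  · calc 20 * v ^ 2 * u ^ 2 * min (4 / (5 * u ^ 4)) (1 / (100 * u * v)) ^ 2
        ≤ 20 * v ^ 2 * u ^ 2 * (1 / (100 * u * v)) ^ 2 := by
          gcongr; exact min_le_right _ _
      _ ≤ 1 / 400 := by field_simp; norm_num
  rw [mul_min_of_nonneg _ _ (by positivity : (0 : ℝ) ≤ 19 / 120 * u ^ 2),
    show 1 / (8 * E) * (u / v) = u / (8 * E * v) by ring]
  refine le_min ?_ ?_
  · rw [show 19 / 120 * u ^ 2 * (4 / (5 * u ^ 4)) = 19 / (150 * u ^ 2) by field_simp; ring,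
      div_le_div_iff₀ (by positivity) (by positivity)]
    nlinarith
  · rw [show 19 / 120 * u ^ 2 * (1 / (100 * u * v)) = 19 * u / (12000 * v) by field_simp; ring,
      div_le_div_iff₀ (by positivity) (by positivity)]
    nlinarith [mul_le_mul_of_nonneg_right hE (mul_pos hu hv).le]

/-- **Lower bound in Theorem 2.1, small-`k` regime**: if `n` and `k` are positive
integers with `2 ≤ k ≤ e^8 n^{1/3}`, then `R_n(F_k) ≥ (1/(8 e^{12})) √(k/n)`. -/
theorem stmt19 (n k : ℕ) (hn : 1 ≤ n) (hk : 2 ≤ k)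
    (hk1 : (k : ℝ) ≤ Real.exp 8 * (n : ℝ) ^ ((1 : ℝ) / 3)) :
    (1 / (8 * Real.exp 12)) * Real.sqrt ((k : ℝ) / n) ≤ minimaxRisk n k (Fk k) := by
  have hku : √(k : ℝ) ^ 2 = k := sq_sqrt (Nat.cast_nonneg k)
  have hnv : √(n : ℝ) ^ 2 = n := sq_sqrt (Nat.cast_nonneg n)
  have hE : 85 ≤ exp 12 := by linarith [quadratic_le_exp_of_nonneg (x := 12) (by norm_num)]
  obtain ⟨ε, hε, hεk, hεn, hbound⟩ := exists_perturbation_scale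
    (sqrt_pos.2 (by exact_mod_cast (by omega : 0 < k))) (sqrt_pos.2 (by exact_mod_cast hn))
    (sqrt_pow_three_le hk1) hE
  rw [hku] at hεk
  rw [hku, hnv] at hεn
  calc 1 / (8 * exp 12) * √((k : ℝ) / n) = 1 / (8 * exp 12) * (√k / √n) := by
        rw [sqrt_div' _ (Nat.cast_nonneg n)]
    _ ≤ 19 / 120 * k * ε := by rwa [hku] at hbound
    _ ≤ minimaxRisk n k (Fk k) := mul_le_minimaxRisk_of_le hk hε hεk hεn
end
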